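/- arXiv:2407.21741 — 2 statements merged into one kernel-verified Lean document; each statement's English description precedes it below -/
import Mathlib

section
/- Let A be a linearly topologized vector space over a discrete field k and A* its topological dual with the dual topology. Then the evaluation map ev : A × A* → k, (a, f) ↦ f(a), is continuous as a map from the product topology if and only if A is a Tate vector space. -/
open Filter Topology

/-- A linearly topologized vector space over a discrete field `k`: the neighborhood
filter of `0` has a basis consisting of open linear subspaces. -/
def IsLinearlyTopologized (k V : Type*) [Field k] [AddCommGroup V] [Module k V]
    [TopologicalSpace V] : Prop :=
  (nhds (0 : V)).HasBasis (fun U : Submodule k V => IsOpen (U : Set V))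
    (fun U => (U : Set V))

/-- `L` is linearly bounded if `L/(L ∩ U)` is finite dimensional for every open linear
subspace `U`. -/
def LinearlyBounded (k : Type*) {V : Type*} [Field k] [AddCommGroup V] [Module k V]
    [TopologicalSpace V] (L : Submodule k V) : Prop :=
  ∀ U : Submodule k V, IsOpen (U : Set V) →
    FiniteDimensional k (↥L ⧸ (U.comap L.subtype))

/-- A linear subspace is linearly compact if it is closed, complete with respect to the
induced uniformity, and linearly bounded. -/
def LinearlyCompact (k : Type*) {V : Type*} [Field k] [AddCommGroup V] [Module k V]
    [UniformSpace V] (L : Submodule k V) : Prop :=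
  IsClosed (L : Set V) ∧ IsComplete (L : Set V) ∧ LinearlyBounded k L

/-- The compact-open topology on the space `A →L[k] B` of continuous linear maps: the
neighborhood filter of `0` has as basis the subspaces
`S_{K,W} = {f | f(K) ⊆ W}` for `K ⊆ A` linearly compact and `W ⊆ B` open linear. -/
def IsCompactOpenTopology (k : Type*) {A B : Type*} [Field k] [TopologicalSpace k]
    [AddCommGroup A] [Module k A] [UniformSpace A]
    [AddCommGroup B] [Module k B] [TopologicalSpace B]
    [TopologicalSpace (A →L[k] B)] : Prop :=
  (nhds (0 : A →L[k] B)).HasBasis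
    (fun p : Submodule k A × Submodule k B =>
      LinearlyCompact k p.1 ∧ IsOpen ((p.2 : Set B)))
    (fun p => {f : A →L[k] B | ∀ x ∈ p.1, f x ∈ p.2})

/-- A linearly topologized vector space is a Tate vector space if it is complete and
admits a c-lattice, i.e. an open linearly compact linear subspace. -/
def IsTate (k V : Type*) [Field k] [AddCommGroup V] [Module k V] [UniformSpace V] : Prop :=
  CompleteSpace V ∧ ∃ L : Submodule k V, IsOpen (L : Set V) ∧ LinearlyCompact k L

/-- The dual topology on the topological dual `A →L[k] k`: the neighborhood filter of
`0` has as basis the annihilators of linearly compact subspaces of `A`. -/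
def IsDualTopology (k : Type*) {A : Type*} [Field k] [TopologicalSpace k]
    [AddCommGroup A] [Module k A] [UniformSpace A]
    [TopologicalSpace (A →L[k] k)] : Prop :=
  (nhds (0 : A →L[k] k)).HasBasis (fun L : Submodule k A => LinearlyCompact k L)
    (fun L => {f : A →L[k] k | ∀ x ∈ L, f x = 0})

/-!
If evaluation is continuous at `(0, 0)`, some product `U × L^⊥` of an open subspace `U ⊆ A`
and the annihilator of a linearly compact `L` is mapped to `0`; a functional separating a point
of `U` from the closed subspace `L` shows `U ⊆ L`, so `U` is a c-lattice, and `A` is complete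
because it has a complete neighbourhood of `0`. Conversely, for a c-lattice `L`,
`f a - f₀ a₀ = (f - f₀) (a - a₀) + (f - f₀) a₀ + f₀ (a - a₀)` vanishes as soon as `a - a₀`
lies in the open set `L ∩ ker f₀` and `f - f₀` lies in the neighbourhood `L^⊥ ∩ (k a₀)^⊥`
of `0`, the line `k a₀` being linearly compact.
-/

theorem IsComplete.of_isClosed_subset {α : Type*} [UniformSpace α] {s t : Set α}
    (hs : IsComplete s) (ht : IsClosed t) (hts : t ⊆ s) : IsComplete t := by
  intro f hf hft
  have : f.NeBot := hf.1
  obtain ⟨x, -, hx⟩ := hs f hf (hft.trans (principal_mono.2 hts))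
  exact ⟨x, ht.mem_of_tendsto hx (le_principal_iff.1 hft), hx⟩

theorem completeSpace_of_isComplete_of_mem_nhds_zero {G : Type*} [AddCommGroup G]
    [UniformSpace G] [IsUniformAddGroup G] {K : Set G} (hK : K ∈ 𝓝 0) (hKc : IsComplete K) :
    CompleteSpace G where
  complete {f} hf := by
    have : f.NeBot := hf.1
    obtain ⟨x, hx⟩ : ∃ x, ∀ᶠ y in f, y - x ∈ K := by
      rw [cauchy_iff_le, uniformity_eq_comap_nhds_zero, ← tendsto_iff_comap] at hf
      exact (hf.eventually_mem hK).curry.exists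
    have hKx : IsComplete ((· + x) '' K) :=
      (isComplete_image_iff (isUniformEmbedding_translate_add x).isUniformInducing).2 hKc
    obtain ⟨l, -, hl⟩ := hKx f hf <| le_principal_iff.2 <|
      hx.mono fun y hy => ⟨y - x, hy, sub_add_cancel y x⟩
    exact ⟨l, hl⟩

theorem Submodule.isComplete_of_disjoint_of_isOpen {R A : Type*} [Ring R] [AddCommGroup A]
    [Module R A] [UniformSpace A] [IsUniformAddGroup A] {S W : Submodule R A}
    (hW : IsOpen (W : Set A)) (hSW : Disjoint S W) : IsComplete (S : Set A) := by
  have hsep : {p : A × A | p.2 - p.1 ∈ W} ∈ uniformity A := by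
    rw [uniformity_eq_comap_nhds_zero A]
    exact preimage_mem_comap (hW.mem_nhds W.zero_mem)
  have hS : (S : Set A) = ⋃ x : S, {(x : A)} := by simp
  rw [hS]
  refine isComplete_iUnion_separated (fun _ => isCompact_singleton.isComplete) hsep ?_
  rintro x y _ rfl _ rfl hxy
  have : (y : A) - x ∈ S ⊓ W := ⟨S.sub_mem y.2 x.2, hxy⟩
  rw [hSW.eq_bot, Submodule.mem_bot, sub_eq_zero] at this
  exact (Subtype.ext this).symm

section LinearTopology

variable {k : Type*} [Field k]

theorem LinearMap.continuous_of_isOpen_le_ker [TopologicalSpace k] [DiscreteTopology k]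
    {A : Type*} [AddCommGroup A] [Module k A] [TopologicalSpace A] [IsTopologicalAddGroup A]
    (f : A →ₗ[k] k) {W : Submodule k A}
    (hW : IsOpen (W : Set A)) (hWf : W ≤ LinearMap.ker f) : Continuous f := by
  refine continuous_of_continuousAt_zero f ?_
  rw [ContinuousAt, nhds_discrete k, map_zero, tendsto_pure]
  exact mem_of_superset (hW.mem_nhds W.zero_mem) hWf

theorem LinearlyBounded.mono {A : Type*} [AddCommGroup A] [Module k A] [TopologicalSpace A]
    {U L : Submodule k A} (hL : LinearlyBounded k L) (hUL : U ≤ L) : LinearlyBounded k U := by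
  intro W hW
  have := hL W hW
  have hcomap : W.comap U.subtype = (W.comap L.subtype).comap (Submodule.inclusion hUL) := by
    rw [← Submodule.comap_comp, Submodule.subtype_comp_inclusion]
  refine Module.Finite.of_injective
    ((W.comap U.subtype).mapQ (W.comap L.subtype) (Submodule.inclusion hUL) hcomap.le) ?_
  rw [← LinearMap.ker_eq_bot, Submodule.ker_mapQ, ← hcomap, Submodule.mkQ_map_self]

theorem continuous_eval_of_annihilator_mem_nhds [TopologicalSpace k] [DiscreteTopology k]
    {A : Type*} [AddCommGroup A] [Module k A] [TopologicalSpace A] [IsTopologicalAddGroup A]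
    [TopologicalSpace (A →L[k] k)] [IsTopologicalAddGroup (A →L[k] k)]
    {L : Submodule k A} (hL : IsOpen (L : Set A))
    (hLann : {f : A →L[k] k | ∀ x ∈ L, f x = 0} ∈ 𝓝 0)
    (hpt : ∀ a : A, {f : A →L[k] k | f a = 0} ∈ 𝓝 0) :
    Continuous fun p : A × (A →L[k] k) => p.2 p.1 := by
  refine continuous_iff_continuousAt.2 fun ⟨a₀, f₀⟩ => ?_
  rw [ContinuousAt, nhds_discrete k, tendsto_pure]
  have ha : ∀ᶠ a in 𝓝 a₀, a - a₀ ∈ L ∧ f₀ (a - a₀) = 0 := by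
    have hker : ∀ᶠ a in 𝓝 (0 : A), f₀ a = 0 := by
      simpa [nhds_discrete k] using f₀.continuous.tendsto 0
    exact tendsto_sub_nhds_zero_iff.2 tendsto_id |>.eventually
      (inter_mem (hL.mem_nhds L.zero_mem) hker)
  have hf : ∀ᶠ f in 𝓝 f₀, (∀ x ∈ L, (f - f₀) x = 0) ∧ (f - f₀) a₀ = 0 :=
    tendsto_sub_nhds_zero_iff.2 tendsto_id |>.eventually (inter_mem hLann (hpt a₀))
  filter_upwards [ha.prod_nhds hf] with ⟨a, f⟩ ⟨⟨haL, hf₀a⟩, hfL, hfa₀⟩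
  have hsplit : f a - f₀ a₀ = (f - f₀) (a - a₀) + (f - f₀) a₀ + f₀ (a - a₀) := by
    simp only [sub_apply, map_sub]
    ring
  simpa [sub_eq_zero, hfL _ haL, hfa₀, hf₀a] using hsplit

variable {A : Type*} [AddCommGroup A] [Module k A] [UniformSpace A]

theorem IsLinearlyTopologized.exists_isOpen_disjoint_span_singleton [T1Space A]
    (hA : IsLinearlyTopologized k A) (a : A) :
    ∃ W : Submodule k A, IsOpen (W : Set A) ∧ Disjoint W (k ∙ a) := by
  rcases eq_or_ne a 0 with rfl | ha
  · obtain ⟨W, hW, -⟩ := hA.mem_iff.1 (univ_mem (f := 𝓝 (0 : A)))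
    exact ⟨W, hW, by simp⟩
  · obtain ⟨W, hW, hWa⟩ := hA.mem_iff.1 (isOpen_compl_singleton.mem_nhds ha.symm)
    exact ⟨W, hW, (Submodule.disjoint_span_singleton' ha).2 fun haW => hWa haW rfl⟩

theorem IsLinearlyTopologized.linearlyCompact_span_singleton [IsUniformAddGroup A] [T1Space A]
    (hA : IsLinearlyTopologized k A) (a : A) :
    LinearlyCompact k (k ∙ a) := by
  obtain ⟨W, hW, hWa⟩ := hA.exists_isOpen_disjoint_span_singleton a
  have hc := Submodule.isComplete_of_disjoint_of_isOpen hW hWa.symm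
  exact ⟨hc.isClosed, hc, fun _ _ => inferInstance⟩

theorem IsLinearlyTopologized.exists_continuousLinearMap_of_notMem [TopologicalSpace k]
    [DiscreteTopology k] [IsUniformAddGroup A] (hA : IsLinearlyTopologized k A) {L : Submodule k A}
    (hL : IsClosed (L : Set A)) {u : A} (hu : u ∉ L) :
    ∃ f : A →L[k] k, (∀ x ∈ L, f x = 0) ∧ f u ≠ 0 := by
  have hnhds : (fun w => u + w) ⁻¹' (L : Set A)ᶜ ∈ 𝓝 (0 : A) :=
    (continuous_const_add u).continuousAt.preimage_mem_nhds
      (by simpa using hL.isOpen_compl.mem_nhds hu)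
  obtain ⟨W, hW, hWL⟩ := hA.mem_iff.1 hnhds
  have huLW : u ∉ L ⊔ W := by
    intro h
    obtain ⟨l, hl, w, hw, rfl⟩ := Submodule.mem_sup.1 h
    exact hWL (W.neg_mem hw) (by simpa using hl)
  obtain ⟨f, hfu, hLW⟩ := Submodule.exists_le_ker_of_notMem huLW
  refine ⟨⟨f, f.continuous_of_isOpen_le_ker hW (le_sup_right.trans hLW)⟩,
    fun x hx => hLW (Submodule.mem_sup_left hx), hfu⟩

theorem LinearlyCompact.of_isOpen_le [IsUniformAddGroup A] {U L : Submodule k A}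
    (hL : LinearlyCompact k L) (hU : IsOpen (U : Set A)) (hUL : U ≤ L) : LinearlyCompact k U := by
  have hUc : IsClosed (U : Set A) := U.toAddSubgroup.isClosed_of_isOpen hU
  exact ⟨hUc, hL.2.1.of_isClosed_subset hUc hUL, hL.2.2.mono hUL⟩

theorem IsLinearlyTopologized.exists_isOpen_le_linearlyCompact_of_continuous_eval
    [TopologicalSpace k] [DiscreteTopology k] [IsUniformAddGroup A]
    (hA : IsLinearlyTopologized k A) [TopologicalSpace (A →L[k] k)]
    (hdual : IsDualTopology k (A := A)) (hcont : Continuous fun p : A × (A →L[k] k) => p.2 p.1) :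
    ∃ U L : Submodule k A, IsOpen (U : Set A) ∧ LinearlyCompact k L ∧ U ≤ L := by
  have h0 : ∀ᶠ p : A × (A →L[k] k) in 𝓝 (0, 0), p.2 p.1 = 0 := by
    simpa [nhds_discrete k] using hcont.tendsto (0, 0)
  rw [nhds_prod_eq] at h0
  obtain ⟨⟨U, L⟩, ⟨hU, hL⟩, hsub⟩ := (hA.prod hdual).eventually_iff.1 h0
  refine ⟨U, L, hU, hL, fun u hu => ?_⟩
  by_contra huL
  obtain ⟨f, hfL, hfu⟩ := hA.exists_continuousLinearMap_of_notMem hL.1 huL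
  exact hfu (hsub (Set.mk_mem_prod hu hfL))

end LinearTopology

theorem evaluation_continuous_iff_tate_general
    {k : Type*} [Field k] [TopologicalSpace k] [DiscreteTopology k]
    {A : Type*} [AddCommGroup A] [Module k A] [UniformSpace A]
    [IsUniformAddGroup A] [T2Space A]
    (hA : IsLinearlyTopologized k A)
    [TopologicalSpace (A →L[k] k)] [IsTopologicalAddGroup (A →L[k] k)]
    (hdual : IsDualTopology k (A := A)) :
    Continuous (fun p : A × (A →L[k] k) => p.2 p.1) ↔ IsTate k A := by
  constructor
  · intro hcont
    obtain ⟨U, L, hU, hL, hUL⟩ := hA.exists_isOpen_le_linearlyCompact_of_continuous_eval hdual hcont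
    have hUc := hL.of_isOpen_le hU hUL
    exact ⟨completeSpace_of_isComplete_of_mem_nhds_zero (hU.mem_nhds U.zero_mem) hUc.2.1,
      U, hU, hUc⟩
  · rintro ⟨-, L, hL, hLc⟩
    refine continuous_eval_of_annihilator_mem_nhds hL (hdual.mem_of_mem hLc) fun a => ?_
    refine mem_of_superset (hdual.mem_of_mem (hA.linearlyCompact_span_singleton a)) ?_
    exact fun f hf => hf a (Submodule.mem_span_singleton_self a)

/-- The evaluation map `A × A* → k` is continuous for the product topology (with `A*`
carrying its dual topology) if and only if `A` is a Tate vector space. -/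
theorem evaluation_continuous_iff_tate
    {k : Type*} [Field k] [TopologicalSpace k] [DiscreteTopology k]
    {A : Type*} [AddCommGroup A] [Module k A] [UniformSpace A]
    [IsUniformAddGroup A] [ContinuousSMul k A] [T2Space A]
    (hA : IsLinearlyTopologized k A)
    [TopologicalSpace (A →L[k] k)] [IsTopologicalAddGroup (A →L[k] k)]
    (hdual : IsDualTopology k (A := A)) :
    Continuous (fun p : A × (A →L[k] k) => p.2 p.1) ↔ IsTate k A :=
  evaluation_continuous_iff_tate_general hA hdual
end

section
/- Let A, B, C be linearly topologized vector spaces over a discrete field k, with B a Tate vector space. For a bilinear map f : A × B → C, the following are equivalent: (1) f is continuous with respect to the product topology on A × B; (2) for every a ∈ A the linear map f(a, ·) : B → C is continuous, and the induced linear map A → Hom(B,C), a ↦ f(a, ·), is continuous when Hom(B,C) carries the compact-open topology. -/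
open Filter Topology

/-
The forward direction is the heart of the matter: given a linearly compact `K` and an open
subspace `W`, joint continuity at the origin yields a neighbourhood `U` of `0 ∈ A` and an open
subspace `V ⊆ B` with `f(U × V) ⊆ W`; since `K/(K ∩ V)` is finite dimensional, `K` lies in
`V` plus the span of finitely many vectors, and continuity of `f(·, x)` at those finitely many
`x` shrinks `U` so that `f(U × K) ⊆ W`. Conversely, `f` is the composite of `g × id` with
evaluation `Hom(B, C) × B → C`. Evaluation is biadditive, so it suffices to check continuity
at the origin, where `S_{L,W} × L` is mapped into `W` for a c-lattice `L`, and separately in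
each variable; in the first this uses that lines `k ∙ b` are linearly compact, being discrete
in the Hausdorff space `B`.
-/

theorem Submodule.exists_finite_le_span_sup {R M : Type*} [Ring R] [AddCommGroup M]
    [Module R M] {K N : Submodule R M} [Module.Finite R (K ⧸ N.comap K.subtype)] :
    ∃ s : Set M, s.Finite ∧ K ≤ span R s ⊔ N := by
  set N' := N.comap K.subtype
  obtain ⟨t, ht⟩ := Module.Finite.fg_top (R := R) (M := K ⧸ N')
  set lift := Function.surjInv N'.mkQ_surjective
  have hspan : span R (lift '' t) ⊔ N' = ⊤ := by
    rw [sup_comm, ← comap_map_mkQ, map_span, Set.image_image,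
      funext (Function.surjInv_eq N'.mkQ_surjective), Set.image_id', ht, comap_top]
  refine ⟨K.subtype '' (lift '' t), (t.finite_toSet.image _).image _, ?_⟩
  calc K = (⊤ : Submodule R K).map K.subtype := (map_subtype_top K).symm
    _ = span R (K.subtype '' (lift '' t)) ⊔ N'.map K.subtype := by
      rw [← hspan, map_sup, map_span]
    _ ≤ span R (K.subtype '' (lift '' t)) ⊔ N := sup_le_sup_left (map_comap_le _ _) _

theorem AddSubgroup.isComplete_of_disjoint {G : Type*} [AddGroup G] [UniformSpace G]
    [IsUniformAddGroup G] {S V : AddSubgroup G} (hV : (V : Set G) ∈ 𝓝 0)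
    (hSV : Disjoint S V) : IsComplete (S : Set G) := by
  have hs : {p : G × G | p.2 - p.1 ∈ V} ∈ uniformity G := by
    rw [uniformity_eq_comap_nhds_zero]
    exact preimage_mem_comap hV
  have hspaced : Pairwise fun x y : S => ((x : G), (y : G)) ∉ {p : G × G | p.2 - p.1 ∈ V} :=
    fun x y hxy hyx => hxy (Subtype.ext (sub_eq_zero.1
      (AddSubgroup.disjoint_def.1 hSV (S.sub_mem y.2 x.2) hyx)).symm)
  have : DiscreteUniformity S :=
    discreteUniformity_iff_eq_principal_setRelId.2 (comap_uniformity_of_spaced_out hs hspaced)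
  exact completeSpace_coe_iff_isComplete.1 inferInstance

section LinearTopology

variable {k V : Type*} [Field k] [AddCommGroup V] [Module k V]

theorem IsLinearlyTopologized.exists_isOpen_disjoint_span_singleton_s14 [TopologicalSpace V]
    [T1Space V] (hV : IsLinearlyTopologized k V) (v : V) :
    ∃ U : Submodule k V, IsOpen (U : Set V) ∧ Disjoint U (k ∙ v) := by
  simp_rw [Submodule.disjoint_span_singleton]
  rcases eq_or_ne v 0 with rfl | hv
  · obtain ⟨U, hU⟩ := hV.ex_mem
    exact ⟨U, hU, fun _ => rfl⟩
  · obtain ⟨U, hU, hUv⟩ := hV.mem_iff.1 (isOpen_compl_singleton.mem_nhds hv.symm)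
    exact ⟨U, hU, fun h => absurd rfl (hUv h)⟩

theorem IsLinearlyTopologized.linearlyCompact_span_singleton_s14 [UniformSpace V]
    [IsUniformAddGroup V] [T1Space V] (hV : IsLinearlyTopologized k V) (v : V) :
    LinearlyCompact k (k ∙ v) := by
  obtain ⟨U, hU, hUv⟩ := hV.exists_isOpen_disjoint_span_singleton_s14 v
  have hcomplete : IsComplete ((k ∙ v : Submodule k V) : Set V) :=
    AddSubgroup.isComplete_of_disjoint (S := (k ∙ v).toAddSubgroup) (V := U.toAddSubgroup)
      (hU.mem_nhds U.zero_mem)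
      (AddSubgroup.disjoint_def.2 fun hx hU => Submodule.disjoint_def.1 hUv _ hU hx)
  exact ⟨hcomplete.isClosed, hcomplete, fun _ _ => inferInstance⟩

end LinearTopology

section Bilinear

variable {k A B C : Type*} [Field k] [AddCommGroup A] [Module k A] [TopologicalSpace A]
  [AddCommGroup B] [Module k B] [AddCommGroup C] [Module k C] [TopologicalSpace C]

theorem LinearlyBounded.eventually_forall_apply_mem [TopologicalSpace B]
    (hB : IsLinearlyTopologized k B)
    {f : A →ₗ[k] B →ₗ[k] C} (hf : Continuous fun p : A × B => f p.1 p.2)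
    {K : Submodule k B} (hK : LinearlyBounded k K) {W : Submodule k C}
    (hW : IsOpen (W : Set C)) : ∀ᶠ a in 𝓝 0, ∀ y ∈ K, f a y ∈ W := by
  have hW0 : (W : Set C) ∈ 𝓝 0 := hW.mem_nhds W.zero_mem
  have hpre : (fun p : A × B => f p.1 p.2) ⁻¹' W ∈ 𝓝 (0, 0) :=
    hf.continuousAt.preimage_mem_nhds (by simpa using hW0)
  rw [nhds_prod_eq] at hpre
  obtain ⟨⟨U, V⟩, ⟨hU, hV⟩, hUV⟩ := ((𝓝 (0 : A)).basis_sets.prod hB).mem_iff.1 hpre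
  have : FiniteDimensional k (K ⧸ V.comap K.subtype) := hK V hV
  obtain ⟨s, hs, hKs⟩ := Submodule.exists_finite_le_span_sup (K := K) (N := V)
  have hpoints : ∀ x ∈ s, ∀ᶠ a in 𝓝 (0 : A), f a x ∈ W := fun x _ =>
    (hf.comp (continuous_id.prodMk continuous_const)).continuousAt.preimage_mem_nhds
      (by simpa using hW0)
  filter_upwards [hU, (hs.eventually_all).2 hpoints] with a haU has y hy
  obtain ⟨m, hm, v, hv, rfl⟩ := Submodule.mem_sup.1 (hKs hy)
  have hspan : Submodule.span k s ≤ W.comap (f a) := Submodule.span_le.2 has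
  rw [map_add]
  exact W.add_mem (hspan hm) (hUV (Set.mk_mem_prod haU hv))

theorem exists_continuous_curry_of_continuous [TopologicalSpace k] [IsTopologicalAddGroup A]
    [UniformSpace B] [IsTopologicalAddGroup C] [TopologicalSpace (B →L[k] C)]
    [IsTopologicalAddGroup (B →L[k] C)] (hB : IsLinearlyTopologized k B)
    (hco : IsCompactOpenTopology k (A := B) (B := C)) {f : A →ₗ[k] B →ₗ[k] C}
    (hf : Continuous fun p : A × B => f p.1 p.2) :
    ∃ g : A → (B →L[k] C), (∀ a : A, ⇑(g a) = ⇑(f a)) ∧ Continuous g := by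
  let g : A →+ (B →L[k] C) :=
    { toFun := fun a => ⟨f a, hf.comp (Continuous.prodMk_right a)⟩
      map_zero' := by ext; simp
      map_add' := fun _ _ => by ext; simp }
  refine ⟨g, fun _ => rfl, continuous_of_continuousAt_zero g ?_⟩
  rw [ContinuousAt, map_zero]
  exact hco.tendsto_right_iff.2 fun _ ⟨hK, hW⟩ =>
    hK.2.2.eventually_forall_apply_mem hB hf hW

theorem continuous_eval_of_isCompactOpenTopology [TopologicalSpace k] [UniformSpace B]
    [IsUniformAddGroup B] [T1Space B] [IsTopologicalAddGroup C] [TopologicalSpace (B →L[k] C)]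
    [IsTopologicalAddGroup (B →L[k] C)]
    (hB : IsLinearlyTopologized k B) (hC : IsLinearlyTopologized k C)
    (hL : ∃ L : Submodule k B, IsOpen (L : Set B) ∧ LinearlyCompact k L)
    (hco : IsCompactOpenTopology k (A := B) (B := C)) :
    Continuous fun p : (B →L[k] C) × B => p.1 p.2 := by
  obtain ⟨L, hLopen, hL⟩ := hL
  let eval : (B →L[k] C) →+ B →+ C :=
    { toFun := fun φ => φ.toLinearMap.toAddMonoidHom
      map_zero' := rfl
      map_add' := fun _ _ => rfl }
  refine continuous_of_continuousAt_zero₂ eval ?_ (fun φ => φ.continuous.continuousAt) ?_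
  · refine (hC.tendsto_right_iff.2 fun W hW => ?_).mono_right (by simp [eval])
    rw [nhds_prod_eq]
    filter_upwards [prod_mem_prod (hco.mem_of_mem (i := (L, W)) ⟨hL, hW⟩)
      (hLopen.mem_nhds L.zero_mem)] with p hp using hp.1 p.2 hp.2
  · intro b
    refine (hC.tendsto_right_iff.2 fun W hW => ?_).mono_right (by simp [eval])
    filter_upwards [hco.mem_of_mem (i := (k ∙ b, W))
      ⟨hB.linearlyCompact_span_singleton_s14 b, hW⟩] with φ hφ
      using hφ b (Submodule.mem_span_singleton_self b)

end Bilinear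

theorem bilinear_continuous_iff_curried_continuous_general
    {k : Type*} [Field k] [TopologicalSpace k]
    {A : Type*} [AddCommGroup A] [Module k A] [TopologicalSpace A]
    [IsTopologicalAddGroup A]
    {B : Type*} [AddCommGroup B] [Module k B] [UniformSpace B]
    [IsUniformAddGroup B] [T2Space B]
    {C : Type*} [AddCommGroup C] [Module k C] [TopologicalSpace C]
    [IsTopologicalAddGroup C]
    (hB : IsLinearlyTopologized k B)
    (hC : IsLinearlyTopologized k C)
    (hBTate : IsTate k B)
    [TopologicalSpace (B →L[k] C)] [IsTopologicalAddGroup (B →L[k] C)]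
    (hco : IsCompactOpenTopology k (A := B) (B := C))
    (f : A →ₗ[k] B →ₗ[k] C) :
    Continuous (fun p : A × B => f p.1 p.2) ↔
      ∃ g : A → (B →L[k] C), (∀ a : A, ⇑(g a) = ⇑(f a)) ∧ Continuous g := by
  refine ⟨exists_continuous_curry_of_continuous hB hco, ?_⟩
  rintro ⟨g, hg, hgc⟩
  have hf : (fun p : A × B => f p.1 p.2) = fun p => g p.1 p.2 :=
    funext fun p => (congrFun (hg p.1) p.2).symm
  rw [hf]
  exact (continuous_eval_of_isCompactOpenTopology hB hC hBTate.2 hco).comp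
    (hgc.prodMap continuous_id)

/-- For a bilinear map `f : A × B → C` with `B` a Tate vector space, continuity of `f`
for the product topology is equivalent to: each partial map `f(a,·) : B → C` is
continuous, and the induced map `A → Hom(B,C)`, `a ↦ f(a,·)`, is continuous for the
compact-open topology on `Hom(B,C)`. -/
theorem bilinear_continuous_iff_curried_continuous
    {k : Type*} [Field k] [TopologicalSpace k] [DiscreteTopology k]
    {A : Type*} [AddCommGroup A] [Module k A] [TopologicalSpace A]
    [IsTopologicalAddGroup A] [ContinuousSMul k A] [T2Space A]
    {B : Type*} [AddCommGroup B] [Module k B] [UniformSpace B]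
    [IsUniformAddGroup B] [ContinuousSMul k B] [T2Space B]
    {C : Type*} [AddCommGroup C] [Module k C] [TopologicalSpace C]
    [IsTopologicalAddGroup C] [ContinuousSMul k C] [T2Space C]
    (hA : IsLinearlyTopologized k A) (hB : IsLinearlyTopologized k B)
    (hC : IsLinearlyTopologized k C)
    (hBTate : IsTate k B)
    [TopologicalSpace (B →L[k] C)] [IsTopologicalAddGroup (B →L[k] C)]
    (hco : IsCompactOpenTopology k (A := B) (B := C))
    (f : A →ₗ[k] B →ₗ[k] C) :
    Continuous (fun p : A × B => f p.1 p.2) ↔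
      ∃ g : A → (B →L[k] C), (∀ a : A, ⇑(g a) = ⇑(f a)) ∧ Continuous g :=
  bilinear_continuous_iff_curried_continuous_general hB hC hBTate hco f
end
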